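/- arXiv:2412.14767 — 5 statements merged into one kernel-verified Lean document; each statement's English description precedes it below -/
import Mathlib

section
/- Let n ≥ 2 be an integer, let R > 0, let K : [0, R] → ℝ be continuous, and let w : (0, R] → ℝ be differentiable and satisfy the Riccati inequality w'(t) + w(t)²/(n−1) + K(t) ≤ 0 for all t ∈ (0, R], together with the limit condition t²·w(t) → 0 as t → 0⁺. Then for every r ∈ (0, R] one has r²·w(r) ≤ (n−1)·r − ∫₀^r t²·K(t) dt. -/
/-!
Multiplying the Riccati inequality by `t²` and completing the square shows that
`F(t) = (n-1) t - ∫₀ᵗ s² K(s) ds - t² w(t)` has derivative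
`F' ≥ (n - 1 - t w)² / (n - 1) ≥ 0`, so `F` is nondecreasing on `(0, r]`.
The limit condition gives `F(0⁺) = 0`, hence `F(r) ≥ 0`.
-/

open Set Filter MeasureTheory Topology

lemma le_of_tendsto_nhdsGT_of_hasDerivAt_nonneg {F F' : ℝ → ℝ} {a b L : ℝ} (hab : a < b)
    (hcont : ContinuousOn F (Ioc a b)) (hderiv : ∀ t ∈ Ioo a b, HasDerivAt F (F' t) t)
    (hnonneg : ∀ t ∈ Ioo a b, 0 ≤ F' t) (hlim : Tendsto F (𝓝[>] a) (𝓝 L)) : L ≤ F b := by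
  have hmono : MonotoneOn F (Ioc a b) :=
    monotoneOn_of_hasDerivWithinAt_nonneg (convex_Ioc a b) hcont
      (by simpa only [interior_Ioc] using fun t ht => (hderiv t ht).hasDerivWithinAt)
      (by simpa only [interior_Ioc] using hnonneg)
  refine le_of_tendsto hlim ?_
  filter_upwards [Ioo_mem_nhdsGT hab] with t ht
  exact hmono ⟨ht.1, ht.2.le⟩ (right_mem_Ioc.2 hab) ht.2.le

section Primitive

variable {f : ℝ → ℝ} {a b : ℝ}

lemma continuousOn_intervalIntegral_of_continuousOn_Icc (hab : a ≤ b)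
    (hf : ContinuousOn f (Icc a b)) : ContinuousOn (fun u => ∫ x in a..u, f x) (Icc a b) := by
  rw [← uIcc_of_le hab] at hf ⊢
  exact intervalIntegral.continuousOn_primitive_interval (hf.integrableOn_compact isCompact_uIcc)

lemma hasDerivAt_intervalIntegral_of_continuousOn_Icc (hf : ContinuousOn f (Icc a b))
    {t : ℝ} (ht : t ∈ Ioo a b) : HasDerivAt (fun u => ∫ x in a..u, f x) (f t) t := by
  have hfIoo : ContinuousOn f (Ioo a b) := hf.mono Ioo_subset_Icc_self
  refine intervalIntegral.integral_hasDerivAt_right ?_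
    (hfIoo.stronglyMeasurableAtFilter isOpen_Ioo t ht)
    (hfIoo.continuousAt (Ioo_mem_nhds ht.1 ht.2))
  exact (hf.mono (by rw [uIcc_of_le ht.1.le]; exact Icc_subset_Icc_right ht.2.le)).intervalIntegrable

lemma tendsto_intervalIntegral_nhdsGT_of_continuousOn_Icc (hab : a < b)
    (hf : ContinuousOn f (Icc a b)) :
    Tendsto (fun u => ∫ x in a..u, f x) (𝓝[>] a) (𝓝 0) := by
  have hcont := continuousOn_intervalIntegral_of_continuousOn_Icc hab.le hf a (left_mem_Icc.2 hab.le)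
  have : ContinuousWithinAt (fun u => ∫ x in a..u, f x) (Ioi a) a :=
    continuousWithinAt_Ioi_iff_Ici.2 (hcont.mono_of_mem_nhdsWithin (Icc_mem_nhdsGE hab))
  simpa using this.tendsto

end Primitive

lemma sub_sq_mul_riccati_nonneg {c t x x' k : ℝ} (hc : 0 < c) (h : x' + x ^ 2 / c + k ≤ 0) :
    0 ≤ c - t ^ 2 * k - (2 * t * x + t ^ 2 * x') := by
  have h' := mul_le_mul_of_nonneg_left h (sq_nonneg t)
  calc 0 ≤ (c - t * x) ^ 2 / c := by positivity
    _ = c - 2 * t * x + t ^ 2 * (x ^ 2 / c) := by field_simp; ring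
    _ ≤ c - t ^ 2 * k - (2 * t * x + t ^ 2 * x') := by nlinarith

theorem riccati_comparison_general (n : ℕ) (hn : 2 ≤ n) (R : ℝ)
    (K w w' : ℝ → ℝ)
    (hK : ContinuousOn K (Icc 0 R))
    (hw : ∀ t ∈ Ioc (0 : ℝ) R, HasDerivAt w (w' t) t)
    (hRic : ∀ t ∈ Ioc (0 : ℝ) R, w' t + (w t) ^ 2 / ((n : ℝ) - 1) + K t ≤ 0)
    (hlim : Tendsto (fun t => t ^ 2 * w t) (nhdsWithin 0 (Ioi 0)) (nhds 0)) :
    ∀ r ∈ Ioc (0 : ℝ) R,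
      r ^ 2 * w r ≤ ((n : ℝ) - 1) * r - ∫ t in (0 : ℝ)..r, t ^ 2 * K t := by
  rintro r ⟨hr0, hrR⟩
  have hc : (0 : ℝ) < n - 1 := by
    have : (2 : ℝ) ≤ n := by exact_mod_cast hn
    linarith
  have hsub : Ioc 0 r ⊆ Ioc 0 R := Ioc_subset_Ioc_right hrR
  have hf : ContinuousOn (fun t => t ^ 2 * K t) (Icc 0 r) :=
    (continuousOn_pow 2).mul (hK.mono (Icc_subset_Icc_right hrR))
  have hw2 (t) (ht : t ∈ Ioc 0 r) :
      HasDerivAt (fun u => u ^ 2 * w u) (2 * t * w t + t ^ 2 * w' t) t :=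
    ((hasDerivAt_pow 2 t).mul (hw t (hsub ht))).congr_deriv (by norm_num)
  set F : ℝ → ℝ := fun u => ((n : ℝ) - 1) * u - (∫ s in (0 : ℝ)..u, s ^ 2 * K s) - u ^ 2 * w u
    with hF_def
  have hF (t) (ht : t ∈ Ioo 0 r) :
      HasDerivAt F ((n - 1) - t ^ 2 * K t - (2 * t * w t + t ^ 2 * w' t)) t :=
    ((((hasDerivAt_id t).const_mul ((n : ℝ) - 1)).sub
      (hasDerivAt_intervalIntegral_of_continuousOn_Icc hf ht)).sub
      (hw2 t (Ioo_subset_Ioc_self ht))).congr_deriv (by ring)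
  have hFcont : ContinuousOn F (Ioc 0 r) :=
    (((continuous_const_mul _).continuousOn.sub
      (continuousOn_intervalIntegral_of_continuousOn_Icc hr0.le hf)).mono Ioc_subset_Icc_self).sub
      fun t ht => (hw2 t ht).continuousAt.continuousWithinAt
  have hFlim : Tendsto F (𝓝[>] 0) (𝓝 0) := by
    simpa using ((tendsto_nhdsWithin_of_tendsto_nhds
      ((continuous_const_mul ((n : ℝ) - 1)).tendsto 0)).sub
      (tendsto_intervalIntegral_nhdsGT_of_continuousOn_Icc hr0 hf)).sub hlim
  have key := le_of_tendsto_nhdsGT_of_hasDerivAt_nonneg hr0 hFcont hF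
    (fun t ht => sub_sq_mul_riccati_nonneg hc (hRic t (hsub (Ioo_subset_Ioc_self ht)))) hFlim
  simp only [hF_def] at key
  linarith

/-- The Riccati comparison step: if `w` satisfies the Riccati inequality
`w' + w²/(n-1) + K ≤ 0` on `(0, R]` and `t² w(t) → 0` as `t → 0⁺`, then
`r² w(r) ≤ (n-1) r - ∫₀ʳ t² K(t) dt` for all `r ∈ (0, R]`. -/
theorem riccati_comparison (n : ℕ) (hn : 2 ≤ n) (R : ℝ) (hR : 0 < R)
    (K w w' : ℝ → ℝ)
    (hK : ContinuousOn K (Icc 0 R))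
    (hw : ∀ t ∈ Ioc (0 : ℝ) R, HasDerivAt w (w' t) t)
    (hRic : ∀ t ∈ Ioc (0 : ℝ) R, w' t + (w t) ^ 2 / ((n : ℝ) - 1) + K t ≤ 0)
    (hlim : Tendsto (fun t => t ^ 2 * w t) (nhdsWithin 0 (Ioi 0)) (nhds 0)) :
    ∀ r ∈ Ioc (0 : ℝ) R,
      r ^ 2 * w r ≤ ((n : ℝ) - 1) * r - ∫ t in (0 : ℝ)..r, t ^ 2 * K t :=
  riccati_comparison_general n hn R K w w' hK hw hRic hlim
end

section
/- Let R > 0, let K : [0, R] → ℝ be continuous, and let φ : (0, R] → ℝ be differentiable with φ(r) → 0 as r → 0⁺ and φ'(r) ≤ −(1/r²)·∫₀^r t²·K(t) dt for all r ∈ (0, R]. Then for every r ∈ (0, R] one has φ(r) ≤ (1/r)·∫₀^r t²·K(t) dt − ∫₀^r t·K(t) dt. -/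
/-!
Integrating the hypothesis by parts shows that `r ↦ (1/r) ∫₀ʳ t² K - ∫₀ʳ t K` has derivative
`-(1/r²) ∫₀ʳ t² K` and tends to `0` at `0⁺` (its first term is the mean of `t² K(t)` over
`[0, r]`, which tends to `0² K(0)`). Hence `φ` minus this function is antitone on `(0, r]` with limit `0` at `0⁺`,
so it is nonpositive.
-/

open Set Filter MeasureTheory Topology intervalIntegral

theorem le_of_hasDerivAt_le_of_tendsto_sub_nhdsGT {f g f' g' : ℝ → ℝ} {a b : ℝ} (hab : a < b)
    (hfc : ContinuousOn f (Ioc a b)) (hgc : ContinuousOn g (Ioc a b))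
    (hf : ∀ x ∈ Ioo a b, HasDerivAt f (f' x) x) (hg : ∀ x ∈ Ioo a b, HasDerivAt g (g' x) x)
    (hle : ∀ x ∈ Ioo a b, f' x ≤ g' x)
    (hlim : Tendsto (fun x ↦ f x - g x) (𝓝[>] a) (𝓝 0)) :
    f b ≤ g b := by
  have hanti : AntitoneOn (fun x ↦ f x - g x) (Ioc a b) := by
    refine antitoneOn_of_hasDerivWithinAt_nonpos (f' := fun x ↦ f' x - g' x) (convex_Ioc a b)
      (hfc.sub hgc) ?_ ?_
    · intro x hx
      rw [interior_Ioc] at hx ⊢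
      exact ((hf x hx).sub (hg x hx)).hasDerivWithinAt
    · intro x hx
      rw [interior_Ioc] at hx
      exact sub_nonpos.mpr (hle x hx)
  refine sub_nonpos.mp (ge_of_tendsto hlim ?_)
  filter_upwards [Ioo_mem_nhdsGT hab] with x hx
  exact hanti (Ioo_subset_Ioc_self hx) (right_mem_Ioc.mpr hab) hx.2.le

section Primitive

variable {E : Type*} [NormedAddCommGroup E] [NormedSpace ℝ E] [CompleteSpace E]
  {f : ℝ → E} {a b : ℝ}

theorem ContinuousOn.hasDerivWithinAt_intervalIntegral_Icc (hf : ContinuousOn f (Icc a b))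
    {x : ℝ} (hx : x ∈ Icc a b) :
    HasDerivWithinAt (fun u ↦ ∫ t in a..u, f t) (f x) (Icc a b) x := by
  have : Fact (x ∈ Icc a b) := ⟨hx⟩
  exact integral_hasDerivWithinAt_right
    ((hf.mono (Icc_subset_Icc_right hx.2)).intervalIntegrable_of_Icc hx.1)
    (hf.stronglyMeasurableAtFilter_nhdsWithin measurableSet_Icc x) (hf x hx)

theorem ContinuousOn.tendsto_inv_smul_intervalIntegral_nhdsGT (hab : a < b)
    (hf : ContinuousOn f (Icc a b)) :
    Tendsto (fun s ↦ (s - a)⁻¹ • ∫ t in a..s, f t) (𝓝[>] a) (𝓝 (f a)) := by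
  have h := (hasDerivWithinAt_iff_tendsto_slope.mp
    (hf.hasDerivWithinAt_intervalIntegral_Icc (left_mem_Icc.mpr hab.le)))
  rw [Icc_sdiff_left, nhdsWithin_Ioc_eq_nhdsGT hab] at h
  refine h.congr fun s ↦ ?_
  simp [slope_def_module]

end Primitive

/-- For constant `K = k` this is `-k r² / 6`, the leading term of `log (sn_k r / r)`. -/
noncomputable def logAreaBound (K : ℝ → ℝ) (r : ℝ) : ℝ :=
  (1 / r) * (∫ t in (0 : ℝ)..r, t ^ 2 * K t) - ∫ t in (0 : ℝ)..r, t * K t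

theorem hasDerivWithinAt_logAreaBound {K : ℝ → ℝ} {R r : ℝ} (hK : ContinuousOn K (Icc 0 R))
    (hr : r ∈ Ioc 0 R) :
    HasDerivWithinAt (logAreaBound K) (-(1 / r ^ 2) * ∫ t in (0 : ℝ)..r, t ^ 2 * K t)
      (Icc 0 R) r := by
  have hI := ContinuousOn.hasDerivWithinAt_intervalIntegral_Icc (f := fun t ↦ t ^ 2 * K t)
    (by fun_prop) (Ioc_subset_Icc_self hr)
  have hJ := ContinuousOn.hasDerivWithinAt_intervalIntegral_Icc (f := fun t ↦ t * K t)
    (by fun_prop) (Ioc_subset_Icc_self hr)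
  have hinv : HasDerivWithinAt (fun s : ℝ ↦ 1 / s) (-(1 / r ^ 2)) (Icc 0 R) r := by
    simpa only [one_div] using (hasDerivAt_inv hr.1.ne').hasDerivWithinAt
  exact ((hinv.mul hI).sub hJ).congr_deriv (by field_simp; ring)

theorem tendsto_logAreaBound_nhdsGT_zero {K : ℝ → ℝ} {R : ℝ} (hR : 0 < R)
    (hK : ContinuousOn K (Icc 0 R)) :
    Tendsto (logAreaBound K) (𝓝[>] 0) (𝓝 0) := by
  have hI := ContinuousOn.tendsto_inv_smul_intervalIntegral_nhdsGT (f := fun t ↦ t ^ 2 * K t) hR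
    (by fun_prop)
  have hJ := (ContinuousOn.hasDerivWithinAt_intervalIntegral_Icc (f := fun t ↦ t * K t)
    (by fun_prop) (left_mem_Icc.mpr hR.le)).continuousWithinAt.tendsto.mono_left
    (nhdsWithin_Ioc_eq_nhdsGT hR ▸ nhdsWithin_mono _ Ioc_subset_Icc_self)
  show Tendsto (fun r ↦ logAreaBound K r) _ _
  simpa [logAreaBound] using hI.sub hJ

/-- Integration-by-parts step of the Bishop-type volume estimate: if
`φ(r) → 0` as `r → 0⁺` and `φ'(r) ≤ -(1/r²) ∫₀ʳ t² K(t) dt` on `(0, R]`, then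
`φ(r) ≤ (1/r) ∫₀ʳ t² K(t) dt - ∫₀ʳ t K(t) dt` for all `r ∈ (0, R]`. -/
theorem log_area_element_bound (R : ℝ) (hR : 0 < R) (K φ φ' : ℝ → ℝ)
    (hK : ContinuousOn K (Icc 0 R))
    (hφ : ∀ r ∈ Ioc (0 : ℝ) R, HasDerivAt φ (φ' r) r)
    (hlim : Tendsto φ (nhdsWithin 0 (Ioi 0)) (nhds 0))
    (hφ' : ∀ r ∈ Ioc (0 : ℝ) R, φ' r ≤ -(1 / r ^ 2) * ∫ t in (0 : ℝ)..r, t ^ 2 * K t) :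
    ∀ r ∈ Ioc (0 : ℝ) R,
      φ r ≤ (1 / r) * (∫ t in (0 : ℝ)..r, t ^ 2 * K t) - ∫ t in (0 : ℝ)..r, t * K t := by
  intro r hr
  have hsub : Ioc 0 r ⊆ Ioc 0 R := Ioc_subset_Ioc_right hr.2
  have hsub' : Ioo 0 r ⊆ Ioo 0 R := Ioo_subset_Ioo_right hr.2
  refine le_of_hasDerivAt_le_of_tendsto_sub_nhdsGT hr.1
    (fun x hx ↦ (hφ x (hsub hx)).continuousAt.continuousWithinAt)
    (fun x hx ↦ ((hasDerivWithinAt_logAreaBound hK (hsub hx)).continuousWithinAt.mono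
      (hsub.trans Ioc_subset_Icc_self)))
    (fun x hx ↦ hφ x (hsub (Ioo_subset_Ioc_self hx)))
    (fun x hx ↦ (hasDerivWithinAt_logAreaBound hK (Ioo_subset_Ioc_self (hsub' hx))).hasDerivAt
      (Icc_mem_nhds (hsub' hx).1 (hsub' hx).2))
    (fun x hx ↦ hφ' x (hsub (Ioo_subset_Ioc_self hx))) ?_
  simpa using hlim.sub (tendsto_logAreaBound_nhdsGT_zero hR hK)
end

section
/- Let R > 0, let K : [0, R] → ℝ be continuous, and let φ : (0, R] → ℝ be differentiable with φ(r) → 0 as r → 0⁺ and φ'(r) ≤ −(1/r²)·∫₀^r t²·K(t) dt for all r ∈ (0, R]. Then for every r ∈ (0, R] one has φ(r) + r·φ'(r) ≤ −∫₀^r t·K(t) dt; that is, the derivative of r ↦ r·φ(r) is bounded above by −∫₀^r t·K(t) dt. -/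
/-!
Write `G(s) = ∫₀ˢ t² K` and `H(s) = ∫₀ˢ t K`. The comparison function `F(s) = G(s)/s - H(s)`
satisfies `F' = -G/s²` and `F(0⁺) = 0`, so the hypothesis says `(φ - F)' ≤ 0` while
`φ - F → 0` at `0⁺`; hence `φ ≤ F` on `(0, R]`. Adding `r φ'(r) ≤ -G(r)/r` to
`φ(r) ≤ G(r)/r - H(r)` gives `φ(r) + r φ'(r) ≤ -H(r)`.
-/

open Set Filter MeasureTheory

open scoped Topology

theorem ContinuousOn.exists_continuous_eqOn_Icc {α β : Type*} [LinearOrder α] [TopologicalSpace α]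
    [OrderTopology α] [TopologicalSpace β] {a b : α} {f : α → β} (hf : ContinuousOn f (Icc a b))
    (hab : a ≤ b) : ∃ g : α → β, Continuous g ∧ EqOn g f (Icc a b) :=
  ⟨IccExtend hab ((Icc a b).domRestrict f), hf.domRestrict.Icc_extend',
    fun _ hx => IccExtend_of_mem _ _ hx⟩

theorem le_of_tendsto_nhdsGT_of_hasDerivAt_nonpos {f f' : ℝ → ℝ} {a b L : ℝ} (hab : a < b)
    (hf : ∀ x ∈ Ioc a b, HasDerivAt f (f' x) x) (hf' : ∀ x ∈ Ioo a b, f' x ≤ 0)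
    (hlim : Tendsto f (𝓝[>] a) (𝓝 L)) : f b ≤ L := by
  have hanti : AntitoneOn f (Ioc a b) := by
    refine antitoneOn_of_deriv_nonpos (convex_Ioc a b)
      (fun x hx => (hf x hx).continuousAt.continuousWithinAt)
      (fun x hx => ?_) (fun x hx => ?_) <;> rw [interior_Ioc] at hx
    · exact (hf x (Ioo_subset_Ioc_self hx)).differentiableAt.differentiableWithinAt
    · exact (hf x (Ioo_subset_Ioc_self hx)).deriv ▸ hf' x hx
  refine ge_of_tendsto hlim ?_
  filter_upwards [Ioc_mem_nhdsGT hab] with x hx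
  exact hanti hx (right_mem_Ioc.2 hab) hx.2

section

variable {k : ℝ → ℝ}

theorem hasDerivAt_integral_sq_mul_div_sub_integral_mul (hk : Continuous k) {s : ℝ}
    (hs : s ≠ 0) :
    HasDerivAt (fun s => (∫ t in (0 : ℝ)..s, t ^ 2 * k t) / s - ∫ t in (0 : ℝ)..s, t * k t)
      (-(∫ t in (0 : ℝ)..s, t ^ 2 * k t) / s ^ 2) s := by
  have hG := (by fun_prop : Continuous fun t => t ^ 2 * k t).integral_hasStrictDerivAt 0 s
  have hH := (by fun_prop : Continuous fun t => t * k t).integral_hasStrictDerivAt 0 s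
  refine ((hG.hasDerivAt.div (hasDerivAt_id s) hs).sub hH.hasDerivAt).congr_deriv ?_
  simp only [id]
  field_simp
  ring

theorem tendsto_integral_sq_mul_div_sub_integral_mul (hk : Continuous k) :
    Tendsto (fun s => (∫ t in (0 : ℝ)..s, t ^ 2 * k t) / s - ∫ t in (0 : ℝ)..s, t * k t)
      (𝓝[>] 0) (𝓝 0) := by
  have hG := ((by fun_prop : Continuous fun t => t ^ 2 * k t).integral_hasStrictDerivAt 0
    0).hasDerivAt.tendsto_slope_zero_right
  have hH := ((by fun_prop : Continuous fun t => t * k t).integral_hasStrictDerivAt 0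
    0).hasDerivAt.continuousAt.continuousWithinAt (s := Ioi 0)
  simpa [div_eq_inv_mul] using hG.sub hH.tendsto

end

theorem add_mul_le_neg_integral_of_continuous {R : ℝ} {k φ φ' : ℝ → ℝ} (hk : Continuous k)
    (hφ : ∀ r ∈ Ioc (0 : ℝ) R, HasDerivAt φ (φ' r) r)
    (hlim : Tendsto φ (𝓝[>] 0) (𝓝 0))
    (hφ' : ∀ r ∈ Ioc (0 : ℝ) R, φ' r ≤ -(1 / r ^ 2) * ∫ t in (0 : ℝ)..r, t ^ 2 * k t) :
    ∀ r ∈ Ioc (0 : ℝ) R, φ r + r * φ' r ≤ -∫ t in (0 : ℝ)..r, t * k t := by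
  intro r hr
  set G : ℝ → ℝ := fun s => ∫ t in (0 : ℝ)..s, t ^ 2 * k t
  set F : ℝ → ℝ := fun s => G s / s - ∫ t in (0 : ℝ)..s, t * k t
  have hφF : φ r ≤ F r := by
    refine sub_nonpos.1 <|
      le_of_tendsto_nhdsGT_of_hasDerivAt_nonpos (f := fun s => φ s - F s) hr.1
      (fun x hx => (hφ x ⟨hx.1, hx.2.trans hr.2⟩).sub
        (hasDerivAt_integral_sq_mul_div_sub_integral_mul hk hx.1.ne'))
      (fun x hx => ?_) (by simpa using hlim.sub (tendsto_integral_sq_mul_div_sub_integral_mul hk))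
    have := hφ' x ⟨hx.1, hx.2.le.trans hr.2⟩
    rw [neg_div, div_eq_inv_mul, ← one_div]
    linarith
  calc φ r + r * φ' r ≤ F r + r * (-(1 / r ^ 2) * G r) :=
        add_le_add hφF (mul_le_mul_of_nonneg_left (hφ' r hr) hr.1.le)
    _ = -∫ t in (0 : ℝ)..r, t * k t := by
        simp only [F, G]
        field_simp [hr.1.ne']
        ring

/-- Combined differential bound in the Bishop-type volume estimate: if
`φ(r) → 0` as `r → 0⁺` and `φ'(r) ≤ -(1/r²) ∫₀ʳ t² K(t) dt` on `(0, R]`, then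
`φ(r) + r φ'(r) ≤ -∫₀ʳ t K(t) dt`, i.e. the derivative of `r ↦ r φ(r)` is bounded
above by `-∫₀ʳ t K(t) dt`, for all `r ∈ (0, R]`. -/
theorem deriv_r_phi_bound (R : ℝ) (hR : 0 < R) (K φ φ' : ℝ → ℝ)
    (hK : ContinuousOn K (Icc 0 R))
    (hφ : ∀ r ∈ Ioc (0 : ℝ) R, HasDerivAt φ (φ' r) r)
    (hlim : Tendsto φ (nhdsWithin 0 (Ioi 0)) (nhds 0))
    (hφ' : ∀ r ∈ Ioc (0 : ℝ) R, φ' r ≤ -(1 / r ^ 2) * ∫ t in (0 : ℝ)..r, t ^ 2 * K t) :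
    ∀ r ∈ Ioc (0 : ℝ) R,
      φ r + r * φ' r ≤ -∫ t in (0 : ℝ)..r, t * K t := by
  obtain ⟨k, hk, hkK⟩ := hK.exists_continuous_eqOn_Icc hR.le
  have hk_integral (g : ℝ → ℝ) {r : ℝ} (hr : r ∈ Ioc (0 : ℝ) R) :
      ∫ t in (0 : ℝ)..r, g t * k t = ∫ t in (0 : ℝ)..r, g t * K t := by
    refine intervalIntegral.integral_congr fun t ht => ?_
    rw [uIcc_of_le hr.1.le] at ht
    simp only [hkK ⟨ht.1, ht.2.trans hr.2⟩]
  intro r hr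
  rw [← hk_integral _ hr]
  refine add_mul_le_neg_integral_of_continuous hk hφ hlim (fun s hs => ?_) r hr
  rw [hk_integral _ hs]
  exact hφ' s hs
end

section
/- Let n ≥ 2 be an integer, λ ∈ ℝ, and R̄ > 0. Let f : [0, R̄] → ℝ be twice continuously differentiable, let K₀ : [0, R̄] → ℝ be continuous with K₀(t) ≥ 0 for all t, and let J : (0, R̄] → (0, ∞) be twice differentiable such that J(r)/r^{n−1} → 1 and t²·(J'(t)/J(t)) → 0 as r, t → 0⁺, and such that (J'/J)'(t) + (J'(t)/J(t))²/(n−1) + K₀(t) + λ − f''(t) ≤ 0 for all t ∈ (0, R̄]. Then for every r ∈ (0, R̄] one has J(r) ≤ r^{n−1}·exp(−λr²/6 + f(r) + f(0) − (2/r)·∫₀^r f(t) dt). -/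
/-!
Put `ψ = J'/J`, `m = n - 1`, and let `Φ` be the exponent in the bound. Two integrations by parts
give `t²Φ'(t) = -λt³/3 + t²f'(t) - 2tf(t) + 2∫₀ᵗ f = ∫₀ᵗ s²(f''(s) - λ) ds`. Dropping `K₀ ≥ 0`,
the Riccati inequality and AM-GM (`2tψ ≤ m + t²ψ²/m`) make `t²ψ - mt - t²Φ'` nonincreasing
on `(0, R]`; it tends to `0` at `0⁺`, so `ψ ≤ m/t + Φ'`. Hence `log J - m log t - Φ` is
nonincreasing as well, and it also tends to `0` at `0⁺`, since `J(t) ~ t^m` and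
`(1/t)∫₀ᵗ f → f(0)`.
-/

open Set Filter Topology MeasureTheory Real

theorem le_of_tendsto_nhdsGT_of_hasDerivAt_nonpos_s4 {φ φ' : ℝ → ℝ} {a b L : ℝ}
    (hφc : ContinuousOn φ (Ioc a b)) (hφ : ∀ t ∈ Ioo a b, HasDerivAt φ (φ' t) t)
    (hφ' : ∀ t ∈ Ioo a b, φ' t ≤ 0) (hlim : Tendsto φ (𝓝[>] a) (𝓝 L)) :
    ∀ x ∈ Ioc a b, φ x ≤ L := by
  have hanti : AntitoneOn φ (Ioc a b) :=
    antitoneOn_of_hasDerivWithinAt_nonpos (convex_Ioc a b) hφc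
      (fun t ht => (hφ t (by simpa using ht)).hasDerivWithinAt)
      (fun t ht => hφ' t (by simpa using ht))
  intro x hx
  refine ge_of_tendsto hlim ?_
  filter_upwards [Ioc_mem_nhdsGT hx.1] with t ht
  exact hanti ⟨ht.1, ht.2.trans hx.2⟩ hx ht.2

theorem hasDerivWithinAt_integral_Icc {E : Type*} [NormedAddCommGroup E] [NormedSpace ℝ E]
    [CompleteSpace E] {f : ℝ → E} {a b t : ℝ} (hf : ContinuousOn f (Icc a b))
    (ht : t ∈ Icc a b) :
    HasDerivWithinAt (fun x => ∫ s in a..x, f s) (f t) (Icc a b) t :=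
  haveI := Fact.mk ht
  intervalIntegral.integral_hasDerivWithinAt_right
    ((hf.mono (Icc_subset_Icc_right ht.2)).intervalIntegrable_of_Icc ht.1)
    (hf.stronglyMeasurableAtFilter_nhdsWithin measurableSet_Icc t) (hf t ht)

theorem continuousOn_integral_Icc {E : Type*} [NormedAddCommGroup E] [NormedSpace ℝ E]
    [CompleteSpace E] {f : ℝ → E} {a b : ℝ} (hf : ContinuousOn f (Icc a b)) :
    ContinuousOn (fun x => ∫ s in a..x, f s) (Icc a b) :=
  fun _ ht => (hasDerivWithinAt_integral_Icc hf ht).continuousWithinAt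

theorem sq_mul_sub_le_of_riccati {ψ ψ' G G' : ℝ → ℝ} {m R : ℝ} (hm : 0 < m)
    (hψc : ContinuousOn ψ (Ioc 0 R)) (hψ : ∀ t ∈ Ioo 0 R, HasDerivAt ψ (ψ' t) t)
    (hGc : ContinuousOn G (Ioc 0 R)) (hG : ∀ t ∈ Ioo 0 R, HasDerivAt G (G' t) t)
    (hric : ∀ t ∈ Ioo 0 R, t ^ 2 * (ψ' t + ψ t ^ 2 / m) ≤ G' t)
    (hψ0 : Tendsto (fun t => t ^ 2 * ψ t) (𝓝[>] 0) (𝓝 0)) (hG0 : Tendsto G (𝓝[>] 0) (𝓝 0)) :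
    ∀ r ∈ Ioc 0 R, r ^ 2 * ψ r - m * r ≤ G r := by
  have hlin : Tendsto (fun t : ℝ => m * t) (𝓝[>] 0) (𝓝 0) :=
    tendsto_nhdsWithin_of_tendsto_nhds ((continuous_const_mul m).tendsto' 0 0 (mul_zero m))
  have hmono := le_of_tendsto_nhdsGT_of_hasDerivAt_nonpos_s4
    (φ := fun t => t ^ 2 * ψ t - m * t - G t)
    (((continuousOn_pow 2).mul hψc).sub (continuousOn_const.mul continuousOn_id) |>.sub hGc)
    (fun t ht => (((hasDerivAt_pow 2 t).mul (hψ t ht)).sub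
      ((hasDerivAt_id' t).const_mul m)).sub (hG t ht))
    ?_ (by simpa using (hψ0.sub hlin).sub hG0)
  · exact fun r hr => sub_nonpos.1 (hmono r hr)
  intro t ht
  have hamgm : 2 * t * ψ t ≤ m + t ^ 2 * (ψ t ^ 2 / m) := by
    have hsq : 0 ≤ (t * ψ t - m) ^ 2 / m := by positivity
    have hexp : (t * ψ t - m) ^ 2 / m = m + t ^ 2 * (ψ t ^ 2 / m) - 2 * t * ψ t := by
      field_simp
      ring
    linarith
  have hric_t := hric t ht
  rw [mul_add] at hric_t
  norm_num
  linarith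

noncomputable def volumeExponent (lam : ℝ) (f : ℝ → ℝ) (r : ℝ) : ℝ :=
  -lam * r ^ 2 / 6 + f r + f 0 - (2 / r) * ∫ t in (0 : ℝ)..r, f t

noncomputable def volumeExponentSqDeriv (lam : ℝ) (f f' : ℝ → ℝ) (t : ℝ) : ℝ :=
  -lam * t ^ 3 / 3 + t ^ 2 * f' t - 2 * (t * f t) + 2 * ∫ s in (0 : ℝ)..t, f s

section VolumeExponent

variable {lam R : ℝ} {f f' f'' : ℝ → ℝ}

theorem hasDerivAt_volumeExponentSqDeriv (hf : ∀ t ∈ Icc 0 R, HasDerivAt f (f' t) t)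
    (hf' : ∀ t ∈ Icc 0 R, HasDerivAt f' (f'' t) t) {t : ℝ} (ht : t ∈ Ioo 0 R) :
    HasDerivAt (volumeExponentSqDeriv lam f f') (t ^ 2 * (f'' t - lam)) t := by
  have htIcc := Ioo_subset_Icc_self ht
  have hF := (hasDerivWithinAt_integral_Icc (HasDerivAt.continuousOn hf) htIcc).hasDerivAt
    (Icc_mem_nhds ht.1 ht.2)
  refine (((((hasDerivAt_pow 3 t).const_mul (-lam)).div_const 3).add
    ((hasDerivAt_pow 2 t).mul (hf' t htIcc))).sub
    (((hasDerivAt_id' t).mul (hf t htIcc)).const_mul 2)).add (hF.const_mul 2) |>.congr_deriv ?_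
  norm_num
  ring

theorem continuousOn_volumeExponentSqDeriv (hf : ∀ t ∈ Icc 0 R, HasDerivAt f (f' t) t)
    (hf' : ∀ t ∈ Icc 0 R, HasDerivAt f' (f'' t) t) :
    ContinuousOn (volumeExponentSqDeriv lam f f') (Icc 0 R) := by
  have hfc := HasDerivAt.continuousOn hf
  have hf'c := HasDerivAt.continuousOn hf'
  have hFc := continuousOn_integral_Icc hfc
  unfold volumeExponentSqDeriv
  fun_prop (disch := norm_num)

theorem tendsto_volumeExponentSqDeriv_nhdsGT (hR : 0 < R)
    (hf : ∀ t ∈ Icc 0 R, HasDerivAt f (f' t) t)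
    (hf' : ∀ t ∈ Icc 0 R, HasDerivAt f' (f'' t) t) :
    Tendsto (volumeExponentSqDeriv lam f f') (𝓝[>] 0) (𝓝 0) := by
  have h := continuousOn_volumeExponentSqDeriv (lam := lam) hf hf' 0 (left_mem_Icc.2 hR.le)
  simpa [volumeExponentSqDeriv] using
    h.tendsto.mono_left (nhdsWithin_Ioc_eq_nhdsGT hR ▸ nhdsWithin_mono 0 Ioc_subset_Icc_self)

theorem hasDerivAt_volumeExponent (hf : ∀ t ∈ Icc 0 R, HasDerivAt f (f' t) t) {t : ℝ}
    (ht : t ∈ Ioo 0 R) :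
    HasDerivAt (volumeExponent lam f) (volumeExponentSqDeriv lam f f' t / t ^ 2) t := by
  have htIcc := Ioo_subset_Icc_self ht
  have hF := (hasDerivWithinAt_integral_Icc (HasDerivAt.continuousOn hf) htIcc).hasDerivAt
    (Icc_mem_nhds ht.1 ht.2)
  have hinv : HasDerivAt (fun r : ℝ => 2 / r) (2 * -(t ^ 2)⁻¹) t := by
    simpa only [div_eq_mul_inv] using (hasDerivAt_inv ht.1.ne').const_mul 2
  refine (((((hasDerivAt_pow 2 t).const_mul (-lam)).div_const 6).add (hf t htIcc)).add_const
    (f 0)).sub (hinv.mul hF) |>.congr_deriv ?_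
  have ht0 : t ≠ 0 := ht.1.ne'
  simp only [volumeExponentSqDeriv]
  field_simp
  ring

theorem continuousOn_volumeExponent (hf : ∀ t ∈ Icc 0 R, HasDerivAt f (f' t) t) :
    ContinuousOn (volumeExponent lam f) (Ioc 0 R) := by
  have hfc := (HasDerivAt.continuousOn hf).mono Ioc_subset_Icc_self
  have hFc := (continuousOn_integral_Icc (HasDerivAt.continuousOn hf)).mono Ioc_subset_Icc_self
  unfold volumeExponent
  fun_prop (disch := first | exact fun x hx => hx.1.ne' | norm_num)

theorem tendsto_volumeExponent_nhdsGT (hR : 0 < R)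
    (hf : ∀ t ∈ Icc 0 R, HasDerivAt f (f' t) t) :
    Tendsto (volumeExponent lam f) (𝓝[>] 0) (𝓝 0) := by
  have hfc := HasDerivAt.continuousOn hf
  have hslope : Tendsto (slope (fun x => ∫ s in (0 : ℝ)..x, f s) 0) (𝓝[>] 0) (𝓝 (f 0)) := by
    have h := hasDerivWithinAt_iff_tendsto_slope.1
      (hasDerivWithinAt_integral_Icc hfc (left_mem_Icc.2 hR.le))
    rwa [Icc_sdiff_left, nhdsWithin_Ioc_eq_nhdsGT hR] at h
  have hpoly : Tendsto (fun r : ℝ => -lam * r ^ 2 / 6) (𝓝[>] 0) (𝓝 0) :=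
    tendsto_nhdsWithin_of_tendsto_nhds (Continuous.tendsto' (by fun_prop) 0 0 (by simp))
  have hf0 : Tendsto f (𝓝[>] 0) (𝓝 (f 0)) :=
    tendsto_nhdsWithin_of_tendsto_nhds (hf 0 (left_mem_Icc.2 hR.le)).continuousAt.tendsto
  have h := ((hpoly.add hf0).add_const (f 0)).sub (hslope.const_mul 2)
  rw [show 0 + f 0 + f 0 - 2 * f 0 = 0 by ring] at h
  refine Tendsto.congr (fun r => ?_) h
  simp only [volumeExponent, slope_def_field, intervalIntegral.integral_same, sub_zero]
  ring

end VolumeExponent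

theorem tendsto_log_sub_mul_log_nhdsGT {J : ℝ → ℝ} {k : ℕ}
    (h : Tendsto (fun t => J t / t ^ k) (𝓝[>] 0) (𝓝 1)) :
    Tendsto (fun t => log (J t) - k * log t) (𝓝[>] 0) (𝓝 0) := by
  have hlog := (continuousAt_log one_ne_zero).tendsto.comp h
  rw [log_one] at hlog
  refine hlog.congr' ?_
  filter_upwards [self_mem_nhdsWithin, h.eventually_ne one_ne_zero] with t (ht : 0 < t) hJt
  rw [Function.comp_apply, log_div (div_ne_zero_iff.1 hJt).1 (pow_pos ht k).ne', log_pow]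

section AreaElement

variable {m lam R : ℝ} {f f' f'' J J' J'' : ℝ → ℝ}

theorem sq_mul_logDeriv_sub_le_volumeExponentSqDeriv (hm : 0 < m)
    (hf : ∀ t ∈ Icc 0 R, HasDerivAt f (f' t) t) (hf' : ∀ t ∈ Icc 0 R, HasDerivAt f' (f'' t) t)
    (hJpos : ∀ t ∈ Ioc 0 R, 0 < J t) (hJ : ∀ t ∈ Ioc 0 R, HasDerivAt J (J' t) t)
    (hJ' : ∀ t ∈ Ioc 0 R, HasDerivAt J' (J'' t) t)
    (hlim : Tendsto (fun t => t ^ 2 * (J' t / J t)) (𝓝[>] 0) (𝓝 0))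
    (hric : ∀ t ∈ Ioc 0 R,
      (J'' t / J t - (J' t / J t) ^ 2) + (J' t / J t) ^ 2 / m + lam - f'' t ≤ 0) :
    ∀ r ∈ Ioc 0 R, r ^ 2 * (J' r / J r) - m * r ≤ volumeExponentSqDeriv lam f f' r := by
  intro r hr
  have hlogDeriv : ∀ t ∈ Ioc 0 R,
      HasDerivAt (fun s => J' s / J s) (J'' t / J t - (J' t / J t) ^ 2) t := by
    intro t ht
    have hJt := (hJpos t ht).ne'
    refine ((hJ' t ht).div (hJ t ht) hJt).congr_deriv ?_
    field_simp
  refine sq_mul_sub_le_of_riccati hm (HasDerivAt.continuousOn hlogDeriv)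
    (fun t ht => hlogDeriv t (Ioo_subset_Ioc_self ht))
    ((continuousOn_volumeExponentSqDeriv hf hf').mono Ioc_subset_Icc_self)
    (fun t ht => hasDerivAt_volumeExponentSqDeriv hf hf' ht)
    (fun t ht => mul_le_mul_of_nonneg_left
      (by linarith [hric t (Ioo_subset_Ioc_self ht)]) (sq_nonneg t))
    hlim (tendsto_volumeExponentSqDeriv_nhdsGT (hr.1.trans_le hr.2) hf hf') r hr

theorem log_sub_mul_log_le_volumeExponent (hf : ∀ t ∈ Icc 0 R, HasDerivAt f (f' t) t)
    (hJpos : ∀ t ∈ Ioc 0 R, 0 < J t) (hJ : ∀ t ∈ Ioc 0 R, HasDerivAt J (J' t) t)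
    (hlim : Tendsto (fun t => log (J t) - m * log t) (𝓝[>] 0) (𝓝 0))
    (hbound : ∀ t ∈ Ioc 0 R,
      t ^ 2 * (J' t / J t) - m * t ≤ volumeExponentSqDeriv lam f f' t) :
    ∀ r ∈ Ioc 0 R, log (J r) - m * log r ≤ volumeExponent lam f r := by
  intro r hr
  have hmono := le_of_tendsto_nhdsGT_of_hasDerivAt_nonpos_s4
    (φ := fun t => log (J t) - m * log t - volumeExponent lam f t)
    (((HasDerivAt.continuousOn hJ).log fun t ht => (hJpos t ht).ne').sub
      (continuousOn_const.mul (continuousOn_id.log fun t ht => ht.1.ne')) |>.sub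
      (continuousOn_volumeExponent hf))
    (fun t ht => (((hJ t (Ioo_subset_Ioc_self ht)).log
      (hJpos t (Ioo_subset_Ioc_self ht)).ne').sub ((hasDerivAt_log ht.1.ne').const_mul m)).sub
      (hasDerivAt_volumeExponent hf ht))
    ?_ (by simpa using hlim.sub (tendsto_volumeExponent_nhdsGT (hr.1.trans_le hr.2) hf)) r hr
  · exact sub_nonpos.1 hmono
  intro t ht
  have ht0 : t ≠ 0 := ht.1.ne'
  have hderiv : J' t / J t - m * t⁻¹ - volumeExponentSqDeriv lam f f' t / t ^ 2
      = (t ^ 2 * (J' t / J t) - m * t - volumeExponentSqDeriv lam f f' t) / t ^ 2 := by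
    field_simp
  rw [hderiv]
  exact div_nonpos_of_nonpos_of_nonneg
    (sub_nonpos.2 (hbound t (Ioo_subset_Ioc_self ht))) (sq_nonneg t)

end AreaElement

theorem area_element_bound_general (n : ℕ) (hn : 2 ≤ n) (lam R : ℝ)
    (f f' f'' K₀ J J' J'' : ℝ → ℝ)
    (hf : ∀ t ∈ Icc (0 : ℝ) R, HasDerivAt f (f' t) t)
    (hf' : ∀ t ∈ Icc (0 : ℝ) R, HasDerivAt f' (f'' t) t)
    (hKnonneg : ∀ t ∈ Icc (0 : ℝ) R, 0 ≤ K₀ t)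
    (hJpos : ∀ t ∈ Ioc (0 : ℝ) R, 0 < J t)
    (hJ : ∀ t ∈ Ioc (0 : ℝ) R, HasDerivAt J (J' t) t)
    (hJ' : ∀ t ∈ Ioc (0 : ℝ) R, HasDerivAt J' (J'' t) t)
    (hlim1 : Tendsto (fun r => J r / r ^ (n - 1)) (nhdsWithin 0 (Ioi 0)) (nhds 1))
    (hlim2 : Tendsto (fun t => t ^ 2 * (J' t / J t)) (nhdsWithin 0 (Ioi 0)) (nhds 0))
    (hRic : ∀ t ∈ Ioc (0 : ℝ) R,
      (J'' t / J t - (J' t / J t) ^ 2) + (J' t / J t) ^ 2 / ((n : ℝ) - 1)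
        + K₀ t + lam - f'' t ≤ 0) :
    ∀ r ∈ Ioc (0 : ℝ) R,
      J r ≤ r ^ (n - 1) *
        Real.exp (-lam * r ^ 2 / 6 + f r + f 0 - (2 / r) * ∫ t in (0 : ℝ)..r, f t) := by
  intro r hr
  have hn1 : ((n - 1 : ℕ) : ℝ) = n - 1 := Nat.cast_pred (by omega)
  have hm : (0 : ℝ) < n - 1 := by
    rw [← hn1]
    exact_mod_cast (by omega : 0 < n - 1)
  have hbound := log_sub_mul_log_le_volumeExponent hf hJpos hJ
    (hn1 ▸ tendsto_log_sub_mul_log_nhdsGT hlim1)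
    (sq_mul_logDeriv_sub_le_volumeExponentSqDeriv (lam := lam) hm hf hf' hJpos hJ hJ' hlim2
      fun t ht => by linarith [hRic t ht, hKnonneg t (Ioc_subset_Icc_self ht)]) r hr
  calc J r = exp (log (J r)) := (exp_log (hJpos r hr)).symm
    _ ≤ exp (log (r ^ (n - 1)) + volumeExponent lam f r) := by
      rw [log_pow, hn1]
      exact exp_le_exp.2 (by linarith)
    _ = _ := by rw [exp_add, exp_log (pow_pos hr.1 _)]; rfl

/-- Pointwise area-element bound underlying the volume growth estimate for complete
noncompact gradient shrinking ρ-Einstein solitons (with ρ > 0 and R ≥ 0): `J` plays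
the role of the area element in polar normal coordinates, `K₀` the nonnegative term
`ρR`, the Riccati inequality `(J'/J)' + (J'/J)²/(n-1) + K₀ + λ - f'' ≤ 0` holds
(here `(J'/J)' = J''/J - (J'/J)²`), `J(r)/r^{n-1} → 1` and `t²(J'/J)(t) → 0` as
`r, t → 0⁺`; then `J(r) ≤ r^{n-1} exp(-λr²/6 + f(r) + f(0) - (2/r) ∫₀ʳ f)`. -/
theorem area_element_bound (n : ℕ) (hn : 2 ≤ n) (lam R : ℝ) (hR : 0 < R)
    (f f' f'' K₀ J J' J'' : ℝ → ℝ)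
    (hf : ∀ t ∈ Icc (0 : ℝ) R, HasDerivAt f (f' t) t)
    (hf' : ∀ t ∈ Icc (0 : ℝ) R, HasDerivAt f' (f'' t) t)
    (hf'' : ContinuousOn f'' (Icc 0 R))
    (hK : ContinuousOn K₀ (Icc 0 R))
    (hKnonneg : ∀ t ∈ Icc (0 : ℝ) R, 0 ≤ K₀ t)
    (hJpos : ∀ t ∈ Ioc (0 : ℝ) R, 0 < J t)
    (hJ : ∀ t ∈ Ioc (0 : ℝ) R, HasDerivAt J (J' t) t)
    (hJ' : ∀ t ∈ Ioc (0 : ℝ) R, HasDerivAt J' (J'' t) t)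
    (hlim1 : Tendsto (fun r => J r / r ^ (n - 1)) (nhdsWithin 0 (Ioi 0)) (nhds 1))
    (hlim2 : Tendsto (fun t => t ^ 2 * (J' t / J t)) (nhdsWithin 0 (Ioi 0)) (nhds 0))
    (hRic : ∀ t ∈ Ioc (0 : ℝ) R,
      (J'' t / J t - (J' t / J t) ^ 2) + (J' t / J t) ^ 2 / ((n : ℝ) - 1)
        + K₀ t + lam - f'' t ≤ 0) :
    ∀ r ∈ Ioc (0 : ℝ) R,
      J r ≤ r ^ (n - 1) *
        Real.exp (-lam * r ^ 2 / 6 + f r + f 0 - (2 / r) * ∫ t in (0 : ℝ)..r, f t) :=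
  area_element_bound_general n hn lam R f f' f'' K₀ J J' J'' hf hf' hKnonneg hJpos hJ hJ' hlim1
    hlim2 hRic
end

section
/- Let n ≥ 2 be an integer, λ ∈ ℝ, and R̄ > 0. Let f : [0, R̄] → ℝ be twice continuously differentiable, let K₀ : [0, R̄] → ℝ be continuous (no sign condition), and let J : (0, R̄] → (0, ∞) be twice differentiable such that J(r)/r^{n−1} → 1 and t²·(J'(t)/J(t)) → 0 as r, t → 0⁺, and such that (J'/J)'(t) + (J'(t)/J(t))²/(n−1) + K₀(t) + λ − f''(t) ≤ 0 for all t ∈ (0, R̄]. Then for every r ∈ (0, R̄] one has J(r)·e^{−f(r)} ≤ r^{n−1}·exp(−λr²/6 + f(0) − (2/r)·∫₀^r f(t) dt − (1/r)·∫₀^r ∫₀^s t·K₀(t) dt ds). -/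
/-!
Put `u = J'/J` and `G = f'' - λ - K₀`, so that the Riccati inequality reads
`u' + u²/(n-1) ≤ G`. Together with `2tu ≤ t²u²/(n-1) + (n-1)` it gives
`(t²u - (n-1)t)' ≤ t²G`; integrating from `0`, where `t²u → 0`, bounds `u - (n-1)/t` by
`t⁻² ∫₀ᵗ s²G`. A second integration, using `J(t)/t^{n-1} → 1`, yields
`log J(r) - (n-1) log r ≤ (1/r) ∫₀ʳ s(r-s) G(s) ds`, and integrating by parts evaluates this
kernel integral through `f(0)`, `f(r)`, `∫₀ʳ f` and `∫₀ʳ ∫₀ˢ t K₀`.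
-/

open Set Filter MeasureTheory Topology

theorem le_of_hasDerivAt_le_of_tendsto_sub_zero {R r : ℝ} {φ ψ φ' ψ' : ℝ → ℝ}
    (hφc : ContinuousOn φ (Ioc 0 R)) (hψc : ContinuousOn ψ (Ioc 0 R))
    (hφ : ∀ t ∈ Ioo 0 R, HasDerivAt φ (φ' t) t) (hψ : ∀ t ∈ Ioo 0 R, HasDerivAt ψ (ψ' t) t)
    (hle : ∀ t ∈ Ioo 0 R, φ' t ≤ ψ' t) (hlim : Tendsto (fun t => ψ t - φ t) (𝓝[>] 0) (𝓝 0))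
    (hr : r ∈ Ioc 0 R) : φ r ≤ ψ r := by
  have hmono : MonotoneOn (fun t => ψ t - φ t) (Ioc 0 R) := by
    refine monotoneOn_of_hasDerivWithinAt_nonneg (convex_Ioc 0 R) (hψc.sub hφc)
      (fun t ht => ?_) (fun t ht => ?_) (f' := fun t => ψ' t - φ' t)
    all_goals rw [interior_Ioc] at ht
    · exact ((hψ t ht).sub (hφ t ht)).hasDerivWithinAt
    · exact sub_nonneg.2 (hle t ht)
  have hev : ∀ᶠ t in 𝓝[>] 0, ψ t - φ t ≤ ψ r - φ r := by
    filter_upwards [Ioc_mem_nhdsGT hr.1] with t ht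
    exact hmono ⟨ht.1, ht.2.trans hr.2⟩ hr ht.2
  linarith [le_of_tendsto hlim hev]

theorem nhdsGT_le_nhdsWithin_Icc_diff {a b : ℝ} (hab : a < b) : 𝓝[>] a ≤ 𝓝[Icc a b \ {a}] a :=
  nhdsWithin_le_of_mem <| mem_of_superset (Ioc_mem_nhdsGT hab)
    fun _ hx => ⟨Ioc_subset_Icc_self hx, hx.1.ne'⟩

section Primitive

variable {E : Type*} [NormedAddCommGroup E] [NormedSpace ℝ E] [CompleteSpace E]
  {g : ℝ → E} {a b : ℝ}

theorem ContinuousOn.hasDerivWithinAt_primitive (hg : ContinuousOn g (Icc a b)) {x : ℝ}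
    (hx : x ∈ Icc a b) : HasDerivWithinAt (fun y => ∫ s in a..y, g s) (g x) (Icc a b) x := by
  have := Fact.mk hx
  exact intervalIntegral.integral_hasDerivWithinAt_right
    ((hg.mono (Icc_subset_Icc le_rfl hx.2)).intervalIntegrable_of_Icc hx.1)
    (hg.stronglyMeasurableAtFilter_nhdsWithin measurableSet_Icc x) (hg x hx)

theorem ContinuousOn.hasDerivAt_primitive (hg : ContinuousOn g (Icc a b)) {x : ℝ}
    (hx : x ∈ Ioo a b) : HasDerivAt (fun y => ∫ s in a..y, g s) (g x) x :=
  (hg.hasDerivWithinAt_primitive (Ioo_subset_Icc_self hx)).hasDerivAt (Icc_mem_nhds hx.1 hx.2)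

theorem ContinuousOn.continuousOn_primitive (hg : ContinuousOn g (Icc a b)) :
    ContinuousOn (fun y => ∫ s in a..y, g s) (Icc a b) :=
  fun _ hx => (hg.hasDerivWithinAt_primitive hx).continuousWithinAt

theorem ContinuousOn.tendsto_primitive_nhdsGT (hg : ContinuousOn g (Icc a b)) (hab : a < b) :
    Tendsto (fun y => ∫ s in a..y, g s) (𝓝[>] a) (𝓝 0) := by
  have := (hg.continuousOn_primitive a ⟨le_rfl, hab.le⟩).tendsto
  rw [intervalIntegral.integral_same] at this
  exact this.mono_left <|
    (nhdsGT_le_nhdsWithin_Icc_diff hab).trans (nhdsWithin_mono _ sdiff_subset)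

end Primitive

theorem ContinuousOn.tendsto_primitive_div_nhdsGT {g : ℝ → ℝ} {a b : ℝ}
    (hg : ContinuousOn g (Icc a b)) (hab : a < b) :
    Tendsto (fun y => (∫ s in a..y, g s) / (y - a)) (𝓝[>] a) (𝓝 (g a)) := by
  have := hasDerivWithinAt_iff_tendsto_slope.1 (hg.hasDerivWithinAt_primitive ⟨le_rfl, hab.le⟩)
  refine (this.mono_left (nhdsGT_le_nhdsWithin_Icc_diff hab)).congr fun y => ?_
  rw [slope_def_field, intervalIntegral.integral_same, sub_zero]

theorem sq_mul_sub_le_integral_of_riccati {R m r : ℝ} (hm : 0 < m) {u u' G : ℝ → ℝ}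
    (hu : ∀ t ∈ Ioc 0 R, HasDerivAt u (u' t) t) (hG : ContinuousOn G (Icc 0 R))
    (hric : ∀ t ∈ Ioc 0 R, u' t + u t ^ 2 / m ≤ G t)
    (hlim : Tendsto (fun t => t ^ 2 * u t) (𝓝[>] 0) (𝓝 0)) (hr : r ∈ Ioc 0 R) :
    r ^ 2 * u r - m * r ≤ ∫ s in 0..r, s ^ 2 * G s := by
  have hg : ContinuousOn (fun s => s ^ 2 * G s) (Icc 0 R) := (continuousOn_pow 2).mul hG
  have hderiv : ∀ t ∈ Ioc 0 R,
      HasDerivAt (fun t => t ^ 2 * u t - m * t) (2 * t * u t + t ^ 2 * u' t - m) t := fun t ht =>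
    (((hasDerivAt_pow 2 t).mul (hu t ht)).sub ((hasDerivAt_id t).const_mul m)).congr_deriv
      (by simp)
  refine le_of_hasDerivAt_le_of_tendsto_sub_zero
    (fun t ht => (hderiv t ht).continuousAt.continuousWithinAt)
    (hg.continuousOn_primitive.mono Ioc_subset_Icc_self)
    (fun t ht => hderiv t (Ioo_subset_Ioc_self ht)) (fun t ht => hg.hasDerivAt_primitive ht)
    (fun t ht => ?_) ?_ hr
  · have hamgm : 2 * t * u t ≤ t ^ 2 * (u t ^ 2 / m) + m := by
      have hsq : (t * u t - m) ^ 2 / m = t ^ 2 * (u t ^ 2 / m) - 2 * t * u t + m := by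
        field_simp; ring
      linarith [hsq ▸ (by positivity : 0 ≤ (t * u t - m) ^ 2 / m)]
    have hric' := mul_le_mul_of_nonneg_left (hric t (Ioo_subset_Ioc_self ht)) (sq_nonneg t)
    rw [mul_add] at hric'
    linarith
  · have hlin : Tendsto (fun t : ℝ => m * t) (𝓝[>] 0) (𝓝 0) := by
      simpa using ((continuous_const_mul m).tendsto 0).mono_left nhdsWithin_le_nhds
    simpa using (hg.tendsto_primitive_nhdsGT (hr.1.trans_le hr.2)).sub (hlim.sub hlin)

theorem log_sub_mul_log_le_of_sq_mul_sub_le {R r : ℝ} {k : ℕ} {J J' G : ℝ → ℝ}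
    (hJpos : ∀ t ∈ Ioc 0 R, 0 < J t) (hJ : ∀ t ∈ Ioc 0 R, HasDerivAt J (J' t) t)
    (hlim : Tendsto (fun t => J t / t ^ k) (𝓝[>] 0) (𝓝 1)) (hG : ContinuousOn G (Icc 0 R))
    (hfirst : ∀ t ∈ Ioc 0 R, t ^ 2 * (J' t / J t) - k * t ≤ ∫ s in 0..t, s ^ 2 * G s)
    (hr : r ∈ Ioc 0 R) :
    Real.log (J r) - k * Real.log r ≤ (∫ s in 0..r, s * (r - s) * G s) / r := by
  have hR : 0 < R := hr.1.trans_le hr.2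
  have hg₁ : ContinuousOn (fun s => s * G s) (Icc 0 R) := continuousOn_id.mul hG
  have hg₂ : ContinuousOn (fun s => s ^ 2 * G s) (Icc 0 R) := (continuousOn_pow 2).mul hG
  have hsplit : (∫ s in 0..r, s * (r - s) * G s) / r =
      (∫ s in 0..r, s * G s) - (∫ s in 0..r, s ^ 2 * G s) / r := by
    have hint : ∀ {g : ℝ → ℝ}, ContinuousOn g (Icc 0 R) → IntervalIntegrable g volume 0 r :=
      fun hg => (hg.mono (Icc_subset_Icc_right hr.2)).intervalIntegrable_of_Icc hr.1.le
    rw [intervalIntegral.integral_congr (g := fun s => r * (s * G s) - s ^ 2 * G s)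
      (fun s _ => by ring), intervalIntegral.integral_sub ((hint hg₁).const_mul r) (hint hg₂),
      intervalIntegral.integral_const_mul]
    field_simp [hr.1.ne']
  rw [hsplit]
  have hφ : ∀ t ∈ Ioc 0 R, HasDerivAt (fun t => Real.log (J t) - k * Real.log t)
      (J' t / J t - k / t) t := fun t ht =>
    (((hJ t ht).log (hJpos t ht).ne').sub
      ((Real.hasDerivAt_log ht.1.ne').const_mul (k : ℝ))).congr_deriv (by field_simp)
  have hψ : ∀ t ∈ Ioo 0 R,
      HasDerivAt (fun t => (∫ s in 0..t, s * G s) - (∫ s in 0..t, s ^ 2 * G s) / t)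
        ((∫ s in 0..t, s ^ 2 * G s) / t ^ 2) t := fun t ht =>
    ((hg₁.hasDerivAt_primitive ht).sub ((hg₂.hasDerivAt_primitive ht).div (hasDerivAt_id' t)
      ht.1.ne')).congr_deriv (by field_simp; ring)
  refine le_of_hasDerivAt_le_of_tendsto_sub_zero
    (fun t ht => (hφ t ht).continuousAt.continuousWithinAt)
    ((hg₁.continuousOn_primitive.mono Ioc_subset_Icc_self).sub
      ((hg₂.continuousOn_primitive.mono Ioc_subset_Icc_self).div continuousOn_id
        fun t ht => ht.1.ne'))
    (fun t ht => hφ t (Ioo_subset_Ioc_self ht)) hψ (fun t ht => ?_) ?_ hr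
  · have hJt := (hJpos t (Ioo_subset_Ioc_self ht)).ne'
    have ht0 := ht.1.ne'
    calc J' t / J t - k / t = (t ^ 2 * (J' t / J t) - k * t) / t ^ 2 := by
          field_simp
      _ ≤ _ := div_le_div_of_nonneg_right (hfirst t (Ioo_subset_Ioc_self ht)) (sq_nonneg t)
  · have hφ0 : Tendsto (fun t => Real.log (J t) - k * Real.log t) (𝓝[>] 0) (𝓝 0) := by
      have := (Real.continuousAt_log one_ne_zero).tendsto.comp hlim
      rw [Real.log_one] at this
      refine this.congr' ?_
      filter_upwards [Ioc_mem_nhdsGT hR] with t ht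
      rw [Function.comp_apply, Real.log_div (hJpos t ht).ne' (pow_pos ht.1 k).ne', Real.log_pow]
    have hψ0 := (hg₁.tendsto_primitive_nhdsGT hR).sub (hg₂.tendsto_primitive_div_nhdsGT hR)
    simpa using hψ0.sub hφ0

theorem integral_sub_mul_sub_mul_second_deriv {a b : ℝ} {f f' f'' : ℝ → ℝ}
    (hf : ∀ x ∈ uIcc a b, HasDerivAt f (f' x) x) (hf' : ∀ x ∈ uIcc a b, HasDerivAt f' (f'' x) x)
    (hf'' : IntervalIntegrable f'' volume a b) :
    ∫ s in a..b, (s - a) * (b - s) * f'' s = (b - a) * (f a + f b) - 2 * ∫ s in a..b, f s := by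
  have hf'c : ContinuousOn f' (uIcc a b) :=
    fun x hx => (hf' x hx).continuousAt.continuousWithinAt
  rw [intervalIntegral.integral_mul_deriv_eq_deriv_mul (u := fun s => (s - a) * (b - s))
      (u' := fun s => a + b - 2 * s)
      (fun x _ => (((hasDerivAt_id' x).sub_const a).mul
        ((hasDerivAt_id' x).const_sub b)).congr_deriv (by ring)) hf'
      ((by fun_prop : Continuous fun s : ℝ => a + b - 2 * s).intervalIntegrable a b) hf'',
    intervalIntegral.integral_mul_deriv_eq_deriv_mul (u := fun s => a + b - 2 * s)
      (u' := fun _ => -2)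
      (fun x _ => (((hasDerivAt_id' x).const_mul 2).const_sub (a + b)).congr_deriv (by ring)) hf
      intervalIntegrable_const hf'c.intervalIntegrable,
    intervalIntegral.integral_const_mul]
  ring

theorem integral_primitive_eq_integral_sub_mul {a b : ℝ} {g : ℝ → ℝ} (hab : a ≤ b)
    (hg : ContinuousOn g (Icc a b)) :
    ∫ s in a..b, ∫ t in a..s, g t = ∫ s in a..b, (b - s) * g s := by
  have := intervalIntegral.integral_mul_deriv_eq_deriv_mul_of_hasDerivWithinAt
    (u := fun s => b - s) (u' := fun _ => -1) (v' := g)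
    (fun x _ => ((hasDerivAt_id' x).const_sub b).hasDerivWithinAt)
    (by rw [uIcc_of_le hab]; exact fun x hx => hg.hasDerivWithinAt_primitive hx)
    intervalIntegrable_const (hg.intervalIntegrable_of_Icc hab)
  simpa using this.symm

theorem integral_mul_sub_mul_sub_sub {r lam : ℝ} {f f' f'' K : ℝ → ℝ} (hr : 0 ≤ r)
    (hf : ∀ x ∈ Icc 0 r, HasDerivAt f (f' x) x) (hf' : ∀ x ∈ Icc 0 r, HasDerivAt f' (f'' x) x)
    (hf'' : ContinuousOn f'' (Icc 0 r)) (hK : ContinuousOn K (Icc 0 r)) :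
    ∫ s in 0..r, s * (r - s) * (f'' s - lam - K s) =
      r * (f 0 + f r) - 2 * (∫ s in 0..r, f s) - lam * r ^ 3 / 6 -
        ∫ s in 0..r, ∫ t in 0..s, t * K t := by
  rw [← uIcc_of_le hr] at hf hf'
  have hsecond := integral_sub_mul_sub_mul_second_deriv hf hf' (hf''.intervalIntegrable_of_Icc hr)
  have hcauchy := integral_primitive_eq_integral_sub_mul hr
    (by fun_prop : ContinuousOn (fun t => t * K t) (Icc 0 r))
  have hpoly : ∫ s in (0 : ℝ)..r, s * (r - s) = r ^ 3 / 6 := by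
    norm_num [mul_sub, integral_id, integral_pow, intervalIntegral.integral_sub,
      intervalIntegral.integral_const_mul, ← pow_two]
    ring
  simp only [sub_zero] at hsecond
  have hint : ∀ {g : ℝ → ℝ}, ContinuousOn g (Icc 0 r) → IntervalIntegrable g volume 0 r :=
    fun hg => hg.intervalIntegrable_of_Icc hr
  calc ∫ s in 0..r, s * (r - s) * (f'' s - lam - K s)
      = (∫ s in 0..r, s * (r - s) * f'' s) - lam * (∫ s in 0..r, s * (r - s)) -
          ∫ s in 0..r, (r - s) * (s * K s) := by
        rw [← intervalIntegral.integral_const_mul, ← intervalIntegral.integral_sub (hint ?_)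
          (hint ?_), ← intervalIntegral.integral_sub (hint ?_) (hint ?_)]
        · exact intervalIntegral.integral_congr fun s _ => by ring
        all_goals fun_prop
    _ = _ := by rw [hsecond, hpoly, hcauchy]; ring

theorem weighted_area_element_bound_general (n : ℕ) (hn : 2 ≤ n) (lam R : ℝ)
    (f f' f'' K₀ J J' J'' : ℝ → ℝ)
    (hf : ∀ t ∈ Icc (0 : ℝ) R, HasDerivAt f (f' t) t)
    (hf' : ∀ t ∈ Icc (0 : ℝ) R, HasDerivAt f' (f'' t) t)
    (hf'' : ContinuousOn f'' (Icc 0 R))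
    (hK : ContinuousOn K₀ (Icc 0 R))
    (hJpos : ∀ t ∈ Ioc (0 : ℝ) R, 0 < J t)
    (hJ : ∀ t ∈ Ioc (0 : ℝ) R, HasDerivAt J (J' t) t)
    (hJ' : ∀ t ∈ Ioc (0 : ℝ) R, HasDerivAt J' (J'' t) t)
    (hlim1 : Tendsto (fun r => J r / r ^ (n - 1)) (nhdsWithin 0 (Ioi 0)) (nhds 1))
    (hlim2 : Tendsto (fun t => t ^ 2 * (J' t / J t)) (nhdsWithin 0 (Ioi 0)) (nhds 0))
    (hRic : ∀ t ∈ Ioc (0 : ℝ) R,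
      (J'' t / J t - (J' t / J t) ^ 2) + (J' t / J t) ^ 2 / ((n : ℝ) - 1)
        + K₀ t + lam - f'' t ≤ 0) :
    ∀ r ∈ Ioc (0 : ℝ) R,
      J r * Real.exp (-f r) ≤ r ^ (n - 1) *
        Real.exp (-lam * r ^ 2 / 6 + f 0 - (2 / r) * (∫ t in (0 : ℝ)..r, f t)
          - (1 / r) * ∫ s in (0 : ℝ)..r, ∫ t in (0 : ℝ)..s, t * K₀ t) := by
  intro r hr
  have hm : ((n - 1 : ℕ) : ℝ) = n - 1 := by rw [Nat.cast_sub (by omega), Nat.cast_one]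
  have hm0 : (0 : ℝ) < (n - 1 : ℕ) := by rw [hm, sub_pos, Nat.one_lt_cast]; omega
  have hG : ContinuousOn (fun t => f'' t - lam - K₀ t) (Icc 0 R) :=
    (hf''.sub continuousOn_const).sub hK
  have hu : ∀ t ∈ Ioc 0 R, HasDerivAt (fun t => J' t / J t) (J'' t / J t - (J' t / J t) ^ 2) t :=
    fun t ht => ((hJ' t ht).div (hJ t ht) (hJpos t ht).ne').congr_deriv (by
      field_simp [(hJpos t ht).ne'])
  have hfirst := fun t ht => sq_mul_sub_le_integral_of_riccati hm0 hu hG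
    (fun s hs => by rw [hm]; linarith [hRic s hs]) hlim2 (r := t) ht
  have hlog := log_sub_mul_log_le_of_sq_mul_sub_le hJpos hJ hlim1 hG hfirst hr
  rw [integral_mul_sub_mul_sub_sub hr.1.le (fun x hx => hf x ⟨hx.1, hx.2.trans hr.2⟩)
    (fun x hx => hf' x ⟨hx.1, hx.2.trans hr.2⟩) (hf''.mono (Icc_subset_Icc_right hr.2))
    (hK.mono (Icc_subset_Icc_right hr.2))] at hlog
  rw [← Real.exp_log (hJpos r hr), ← Real.exp_log (pow_pos hr.1 (n - 1)), ← Real.exp_add,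
    ← Real.exp_add, Real.exp_le_exp, Real.log_pow]
  set F := ∫ t in (0 : ℝ)..r, f t
  set D := ∫ s in (0 : ℝ)..r, ∫ t in (0 : ℝ)..s, t * K₀ t
  have hexponent : (r * (f 0 + f r) - 2 * F - lam * r ^ 3 / 6 - D) / r =
      -lam * r ^ 2 / 6 + f 0 - (2 / r) * F - (1 / r) * D + f r := by
    field_simp [hr.1.ne']
    ring
  linarith

/-- Pointwise weighted area-element bound underlying the weighted volume growth
estimate for complete noncompact gradient ρ-Einstein solitons: `J` plays the role
of the area element in polar normal coordinates, `K₀` the term `ρR` (no sign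
condition), the Riccati inequality `(J'/J)' + (J'/J)²/(n-1) + K₀ + λ - f'' ≤ 0`
holds (here `(J'/J)' = J''/J - (J'/J)²`), `J(r)/r^{n-1} → 1` and
`t²(J'/J)(t) → 0` as `r, t → 0⁺`; then
`J(r) e^{-f(r)} ≤ r^{n-1} exp(-λr²/6 + f(0) - (2/r)∫₀ʳ f - (1/r)∫₀ʳ∫₀ˢ t K₀)`. -/
theorem weighted_area_element_bound (n : ℕ) (hn : 2 ≤ n) (lam R : ℝ) (hR : 0 < R)
    (f f' f'' K₀ J J' J'' : ℝ → ℝ)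
    (hf : ∀ t ∈ Icc (0 : ℝ) R, HasDerivAt f (f' t) t)
    (hf' : ∀ t ∈ Icc (0 : ℝ) R, HasDerivAt f' (f'' t) t)
    (hf'' : ContinuousOn f'' (Icc 0 R))
    (hK : ContinuousOn K₀ (Icc 0 R))
    (hJpos : ∀ t ∈ Ioc (0 : ℝ) R, 0 < J t)
    (hJ : ∀ t ∈ Ioc (0 : ℝ) R, HasDerivAt J (J' t) t)
    (hJ' : ∀ t ∈ Ioc (0 : ℝ) R, HasDerivAt J' (J'' t) t)
    (hlim1 : Tendsto (fun r => J r / r ^ (n - 1)) (nhdsWithin 0 (Ioi 0)) (nhds 1))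
    (hlim2 : Tendsto (fun t => t ^ 2 * (J' t / J t)) (nhdsWithin 0 (Ioi 0)) (nhds 0))
    (hRic : ∀ t ∈ Ioc (0 : ℝ) R,
      (J'' t / J t - (J' t / J t) ^ 2) + (J' t / J t) ^ 2 / ((n : ℝ) - 1)
        + K₀ t + lam - f'' t ≤ 0) :
    ∀ r ∈ Ioc (0 : ℝ) R,
      J r * Real.exp (-f r) ≤ r ^ (n - 1) *
        Real.exp (-lam * r ^ 2 / 6 + f 0 - (2 / r) * (∫ t in (0 : ℝ)..r, f t)
          - (1 / r) * ∫ s in (0 : ℝ)..r, ∫ t in (0 : ℝ)..s, t * K₀ t) :=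
  weighted_area_element_bound_general n hn lam R f f' f'' K₀ J J' J'' hf hf' hf'' hK hJpos hJ hJ'
    hlim1 hlim2 hRic
end
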